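/- arXiv:2202.03098 — 4 statements merged into one kernel-verified Lean document; each statement's English description precedes it below -/
import Mathlib

section
/- For m a positive half-integer, s a half-integer, a a positive integer, and τ in the upper half-plane, z₁, z₂ complex with e^{2πiz₁}q^j ≠ 1 for all integers j (where q = e^{2πiτ}), one has Φ₁^{[m,s]}(τ,z₁,z₂,0) − Φ₁^{[m,s+a]}(τ,z₁,z₂,0) = Σ_{k=0}^{a−1} e^{πi(s+k)(z₁−z₂)} q^{−(s+k)²/(4m)} θ_{s+k,m}(τ, z₁+z₂). -/
open Real Complex Filter Topology

noncomputable section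

noncomputable def Phi1 (m s : ℝ) (τ z1 z2 t : ℂ) : ℂ :=
  Complex.exp (-2*(π:ℂ)*Complex.I*(m:ℂ)*t) *
    ∑' j : ℤ,
      Complex.exp (2*(π:ℂ)*Complex.I*((m:ℂ)*(j:ℂ)*(z1+z2) + (s:ℂ)*z1)) *
        Complex.exp (2*(π:ℂ)*Complex.I*τ*((m:ℂ)*(j:ℂ)^2 + (s:ℂ)*(j:ℂ))) /
        (1 - Complex.exp (2*(π:ℂ)*Complex.I*z1) * Complex.exp (2*(π:ℂ)*Complex.I*τ) ^ j)

noncomputable def Phi2 (m s : ℝ) (τ z1 z2 t : ℂ) : ℂ :=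
  Complex.exp (-2*(π:ℂ)*Complex.I*(m:ℂ)*t) *
    ∑' j : ℤ,
      Complex.exp (-(2*(π:ℂ)*Complex.I)*((m:ℂ)*(j:ℂ)*(z1+z2) + (s:ℂ)*z2)) *
        Complex.exp (2*(π:ℂ)*Complex.I*τ*((m:ℂ)*(j:ℂ)^2 + (s:ℂ)*(j:ℂ))) /
        (1 - Complex.exp (-(2*(π:ℂ)*Complex.I)*z2) * Complex.exp (2*(π:ℂ)*Complex.I*τ) ^ j)

noncomputable def Phi (m s : ℝ) (τ z1 z2 t : ℂ) : ℂ :=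
  Phi1 m s τ z1 z2 t - Phi2 m s τ z1 z2 t

noncomputable def jacobiThetaKM (k m : ℝ) (τ z : ℂ) : ℂ :=
  ∑' j : ℤ,
    Complex.exp (2*(π:ℂ)*Complex.I*(m:ℂ)*((j:ℂ) + (k:ℂ)/(2*(m:ℂ)))*z) *
      Complex.exp (2*(π:ℂ)*Complex.I*τ*(m:ℂ)*((j:ℂ) + (k:ℂ)/(2*(m:ℂ)))^2)

/-!
Put `w = e^{2πiz₁}`. Shifting `s` to `s + 1` multiplies the `j`-th numerator of `Φ₁^{[m,s]}` by
`w qʲ`, so the two series differ termwise by `numerator · (1 - w qʲ) / (1 - w qʲ)`: the poles cancel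
and `Φ₁^{[m,s]} - Φ₁^{[m,s+1]}` is the pole-free series `Σⱼ e^{2πi(m j(z₁+z₂) + s z₁)} q^{m j² + s j}`,
which after completing the square is `e^{πis(z₁-z₂)} q^{-s²/(4m)} θ_{s,m}(τ, z₁+z₂)`.
Telescoping over `s, s+1, …, s+a-1` gives the theorem. All series converge because the numerators
are Jacobi theta terms with nome `q^{2m}`, and `1/(1 - w qʲ)` is `O(1)` as `j → ∞` and `O(q^{-j})`
as `j → -∞`.
-/

section Summability

variable {𝕜 : Type*} [NormedField 𝕜]

theorem tendsto_zpow_atTop_nhds_zero_of_norm_lt_one {q : 𝕜} (hq : ‖q‖ < 1) :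
    Tendsto (fun j : ℤ => q ^ j) atTop (𝓝 0) := by
  rw [← Nat.map_cast_int_atTop, tendsto_map'_iff]
  simpa [Function.comp_def] using tendsto_pow_atTop_nhds_zero_of_norm_lt_one hq

theorem eventually_norm_inv_one_sub_mul_zpow_le_two {w q : 𝕜} (hq : ‖q‖ < 1) :
    ∀ᶠ j : ℤ in atTop, ‖(1 - w * q ^ j)⁻¹‖ ≤ 2 := by
  have h : Tendsto (fun j : ℤ => ‖(1 - w * q ^ j)⁻¹‖) atTop (𝓝 ‖(1 - w * 0)⁻¹‖) :=
    (((tendsto_zpow_atTop_nhds_zero_of_norm_lt_one hq).const_mul w).const_sub 1).inv₀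
      (by simp) |>.norm
  simp only [mul_zero, sub_zero, inv_one, norm_one] at h
  exact h.eventually (ge_mem_nhds one_lt_two)

theorem eventually_norm_inv_zpow_neg_sub_le {w q : 𝕜} (hw : w ≠ 0) (hq : ‖q‖ < 1) :
    ∀ᶠ j : ℤ in atBot, ‖(q ^ (-j) - w)⁻¹‖ ≤ 2 / ‖w‖ := by
  have h : Tendsto (fun j : ℤ => ‖(q ^ (-j) - w)⁻¹‖) atBot (𝓝 ‖(0 - w)⁻¹‖) :=
    (((tendsto_zpow_atTop_nhds_zero_of_norm_lt_one hq).comp tendsto_neg_atBot_atTop).sub_const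
      w).inv₀ (by simpa using hw) |>.norm
  rw [zero_sub, norm_inv, norm_neg] at h
  exact h.eventually (ge_mem_nhds (by
    rw [← one_div]; exact div_lt_div_of_pos_right one_lt_two (norm_pos_iff.mpr hw)))

theorem Summable.div_one_sub_mul_zpow [CompleteSpace 𝕜] {f : ℤ → 𝕜} {w q : 𝕜} (hw : w ≠ 0)
    (hq0 : q ≠ 0) (hq : ‖q‖ < 1) (hf : Summable fun j => ‖f j‖)
    (hf' : Summable fun j => ‖f j * q ^ (-j)‖) :
    Summable fun j => f j / (1 - w * q ^ j) := by
  refine Summable.of_norm_bounded_eventually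
    ((hf.mul_left 2).add (hf'.mul_left (2 / ‖w‖))) ?_
  rw [Int.cofinite_eq, eventually_sup]
  constructor
  · filter_upwards [eventually_norm_inv_zpow_neg_sub_le hw hq] with j hj
    have hfactor : q ^ (-j) - w = q ^ (-j) * (1 - w * q ^ j) := by
      rw [mul_sub, mul_one, mul_left_comm, ← zpow_add₀ hq0, neg_add_cancel, zpow_zero, mul_one]
    have hdiv_eq : f j / (1 - w * q ^ j) = f j * q ^ (-j) * (q ^ (-j) - w)⁻¹ := by
      rw [hfactor, mul_inv, mul_assoc, mul_inv_cancel_left₀ (zpow_ne_zero _ hq0), div_eq_mul_inv]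
    rw [hdiv_eq, norm_mul]
    refine le_add_of_nonneg_of_le (by positivity) ?_
    rw [mul_comm]
    exact mul_le_mul_of_nonneg_right hj (norm_nonneg _)
  · filter_upwards [eventually_norm_inv_one_sub_mul_zpow_le_two (w := w) hq] with j hj
    rw [div_eq_mul_inv, norm_mul]
    refine le_add_of_le_of_nonneg ?_ (by positivity)
    rw [mul_comm]
    exact mul_le_mul_of_nonneg_right hj (norm_nonneg _)

end Summability

noncomputable def phi1Numerator (m s : ℝ) (τ z1 z2 : ℂ) (j : ℤ) : ℂ :=
  cexp (2 * π * I * (m * j * (z1 + z2) + s * z1)) * cexp (2 * π * I * τ * (m * j ^ 2 + s * j))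

section Phi1

variable (m s : ℝ) (τ z1 z2 : ℂ)

theorem phi1_zero_eq_tsum :
    Phi1 m s τ z1 z2 0 = ∑' j : ℤ,
      phi1Numerator m s τ z1 z2 j / (1 - cexp (2 * π * I * z1) * cexp (2 * π * I * τ) ^ j) := by
  simp [Phi1, phi1Numerator]

theorem phi1Numerator_add_one (j : ℤ) :
    phi1Numerator m (s + 1) τ z1 z2 j =
      phi1Numerator m s τ z1 z2 j * (cexp (2 * π * I * z1) * cexp (2 * π * I * τ) ^ j) := by
  simp only [phi1Numerator, ← Complex.exp_int_mul, ← Complex.exp_add]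
  congr 1
  push_cast
  ring

theorem phi1Numerator_eq_mul_jacobiTheta₂_term (j : ℤ) :
    phi1Numerator m s τ z1 z2 j = cexp (2 * π * I * s * z1) *
      jacobiTheta₂_term j (m * (z1 + z2) + s * τ) (2 * m * τ) := by
  rw [phi1Numerator, jacobiTheta₂_term, ← Complex.exp_add, ← Complex.exp_add]
  ring_nf

variable {m τ}

theorem summable_phi1Numerator (hm : 0 < m) (hτ : 0 < τ.im) :
    Summable (phi1Numerator m s τ z1 z2) := by
  have hnome : 0 < (2 * (m : ℂ) * τ).im := by simpa using mul_pos (mul_pos two_pos hm) hτ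
  exact (((summable_jacobiTheta₂_term_iff _ _).mpr hnome).mul_left _).congr fun j =>
    (phi1Numerator_eq_mul_jacobiTheta₂_term m s τ z1 z2 j).symm

theorem summable_phi1_terms (hm : 0 < m) (hτ : 0 < τ.im) :
    Summable fun j : ℤ =>
      phi1Numerator m s τ z1 z2 j / (1 - cexp (2 * π * I * z1) * cexp (2 * π * I * τ) ^ j) := by
  have hq : ‖cexp (2 * π * I * τ)‖ < 1 := by
    simpa [Function.Periodic.qParam] using Function.Periodic.norm_qParam_lt_one one_pos hτ
  refine (summable_phi1Numerator s z1 z2 hm hτ).norm.div_one_sub_mul_zpow (Complex.exp_ne_zero _)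
    (Complex.exp_ne_zero _) hq ?_
  -- `q^{-j}` lowers `s` by one, up to the constant factor `w`
  obtain ⟨t, rfl⟩ : ∃ t, s = t + 1 := ⟨s - 1, by ring⟩
  refine ((summable_phi1Numerator t z1 z2 hm hτ).mul_left (cexp (2 * π * I * z1))).norm.congr
    fun j => congrArg norm ?_
  have hqj : cexp (2 * π * I * τ) ^ j ≠ 0 := zpow_ne_zero _ (Complex.exp_ne_zero _)
  rw [phi1Numerator_add_one, zpow_neg]
  field_simp

theorem phi1_sub_phi1_add_one (hm : 0 < m) (hτ : 0 < τ.im)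
    (hden : ∀ j : ℤ, cexp (2 * π * I * z1) * cexp (2 * π * I * τ) ^ j ≠ 1) :
    Phi1 m s τ z1 z2 0 - Phi1 m (s + 1) τ z1 z2 0 = ∑' j : ℤ, phi1Numerator m s τ z1 z2 j := by
  rw [phi1_zero_eq_tsum, phi1_zero_eq_tsum, ← (summable_phi1_terms s z1 z2 hm hτ).tsum_sub
    (summable_phi1_terms (s + 1) z1 z2 hm hτ)]
  refine tsum_congr fun j => ?_
  have hpole := sub_ne_zero.mpr (hden j).symm
  rw [phi1Numerator_add_one, div_sub_div_same, ← mul_one_sub, mul_div_cancel_right₀ _ hpole]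

theorem tsum_phi1Numerator (hm : 0 < m) :
    ∑' j : ℤ, phi1Numerator m s τ z1 z2 j =
      cexp (π * I * s * (z1 - z2)) * cexp (2 * π * I * τ * ((-(s ^ 2) / (4 * m) : ℝ) : ℂ)) *
        jacobiThetaKM s m τ (z1 + z2) := by
  rw [jacobiThetaKM, ← tsum_mul_left]
  refine tsum_congr fun j => ?_
  have hm' : (m : ℂ) ≠ 0 := by exact_mod_cast hm.ne'
  rw [phi1Numerator, ← Complex.exp_add, ← Complex.exp_add, ← Complex.exp_add, ← Complex.exp_add]
  congr 1
  push_cast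
  field_simp
  ring

end Phi1

theorem stmt0_general (m s : ℝ) (hm : ∃ n : ℕ, 0 < n ∧ m = (n : ℝ) / 2)
    (a : ℕ)
    (τ z1 z2 : ℂ) (hτ : 0 < τ.im)
    (hden : ∀ j : ℤ, Complex.exp (2*(π:ℂ)*Complex.I*z1) * Complex.exp (2*(π:ℂ)*Complex.I*τ) ^ j ≠ 1) :
    Phi1 m s τ z1 z2 0 - Phi1 m (s + a) τ z1 z2 0 =
      ∑ k ∈ Finset.range a,
        Complex.exp ((π:ℂ)*Complex.I*((s:ℂ)+(k:ℂ))*(z1-z2)) *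
          Complex.exp (2*(π:ℂ)*Complex.I*τ*((-((s+(k:ℝ))^2)/(4*m) : ℝ) : ℂ)) *
          jacobiThetaKM (s + k) m τ (z1+z2) := by
  have hm0 : 0 < m := by
    obtain ⟨n, hn, rfl⟩ := hm
    positivity
  calc Phi1 m s τ z1 z2 0 - Phi1 m (s + a) τ z1 z2 0
      = ∑ k ∈ Finset.range a,
          (Phi1 m (s + k) τ z1 z2 0 - Phi1 m (s + k + 1) τ z1 z2 0) := by
        simpa [add_assoc] using
          (Finset.sum_range_sub' (fun k : ℕ => Phi1 m (s + k) τ z1 z2 0) a).symm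
    _ = _ := Finset.sum_congr rfl fun k _ => by
        rw [phi1_sub_phi1_add_one _ _ _ hm0 hτ hden, tsum_phi1Numerator _ _ _ hm0]
        push_cast
        rfl

theorem stmt0 (m s : ℝ) (hm : ∃ n : ℕ, 0 < n ∧ m = (n : ℝ) / 2)
    (hs : ∃ k : ℤ, s = (k : ℝ) / 2) (a : ℕ) (ha : 0 < a)
    (τ z1 z2 : ℂ) (hτ : 0 < τ.im)
    (hden : ∀ j : ℤ, Complex.exp (2*(π:ℂ)*Complex.I*z1) * Complex.exp (2*(π:ℂ)*Complex.I*τ) ^ j ≠ 1) :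
    Phi1 m s τ z1 z2 0 - Phi1 m (s + a) τ z1 z2 0 =
      ∑ k ∈ Finset.range a,
        Complex.exp ((π:ℂ)*Complex.I*((s:ℂ)+(k:ℂ))*(z1-z2)) *
          Complex.exp (2*(π:ℂ)*Complex.I*τ*((-((s+(k:ℝ))^2)/(4*m) : ℝ) : ℂ)) *
          jacobiThetaKM (s + k) m τ (z1+z2) :=
  stmt0_general m s hm a τ z1 z2 hτ hden

end
end

section
/- For m a positive half-integer, s a half-integer, a a positive integer, one has Φ₂^{[m,s]}(τ,z₁,z₂,0) − Φ₂^{[m,s+a]}(τ,z₁,z₂,0) = Σ_{k=0}^{a−1} e^{πi(s+k)(z₁−z₂)} q^{−(s+k)²/(4m)} θ_{−(s+k),m}(τ, z₁+z₂), where the series are taken at points where the denominators do not vanish. -/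
/-!
The numerator of the `j`-th summand of `Φ₂^{[m,s+1]}` is that of `Φ₂^{[m,s]}` times
`e^{-2πiz₂}qʲ`, so in the termwise difference `Φ₂^{[m,s]} - Φ₂^{[m,s+1]}` the denominators
`1 - e^{-2πiz₂}qʲ` cancel, leaving a Gaussian series which, after completing the square in `j`,
is `e^{πis(z₁-z₂)} q^{-s²/(4m)} θ_{-s,m}(τ, z₁+z₂)`. Telescoping over `s, s+1, …, s+a-1` gives
the identity. All series converge absolutely since `|e^{-2πiz₂}qʲ|` tends to `0` or `∞` as
`j → ±∞`, so the denominators are bounded below for all but finitely many `j`.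
-/

open Real Complex Filter Topology

noncomputable section

section ZpowDenominator

variable {𝕜 : Type*} [NormedDivisionRing 𝕜] {w q : 𝕜}

lemma eventually_cofinite_half_le_norm_one_sub_mul_zpow (hw : w ≠ 0) (hq0 : q ≠ 0)
    (hq : ‖q‖ < 1) : ∀ᶠ j : ℤ in cofinite, 1 / 2 ≤ ‖1 - w * q ^ j‖ := by
  rw [Int.cofinite_eq, eventually_sup]
  constructor
  · have hgrow : Tendsto (fun n : ℕ => ‖w‖ * ‖q⁻¹‖ ^ n) atTop atTop :=
      (tendsto_pow_atTop_atTop_of_one_lt (by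
        rw [norm_inv]
        exact one_lt_inv_iff₀.mpr ⟨norm_pos_iff.mpr hq0, hq⟩)).const_mul_atTop (norm_pos_iff.mpr hw)
    rw [← map_neg_atTop, ← Nat.map_cast_int_atTop, map_map, eventually_map]
    filter_upwards [hgrow.eventually_ge_atTop 2] with n hn
    have hrev : ‖w * q ^ (-(n : ℤ))‖ - 1 ≤ ‖1 - w * q ^ (-(n : ℤ))‖ := by
      simpa [norm_sub_rev] using norm_sub_norm_le (w * q ^ (-(n : ℤ))) 1
    simp only [zpow_neg, zpow_natCast, ← inv_pow, norm_mul, norm_pow] at hrev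
    simp only [Function.comp_apply, zpow_neg, zpow_natCast, ← inv_pow]
    linarith
  · have hdecay : Tendsto (fun n : ℕ => ‖1 - w * q ^ n‖) atTop (𝓝 ‖1 - w * 0‖) :=
      ((tendsto_pow_atTop_nhds_zero_of_norm_lt_one hq).const_mul w).const_sub 1 |>.norm
    rw [← Nat.map_cast_int_atTop, eventually_map]
    simpa using hdecay.eventually_const_le (by norm_num : (1 / 2 : ℝ) < ‖1 - w * 0‖)

lemma summable_div_one_sub_mul_zpow [CompleteSpace 𝕜] {f : ℤ → 𝕜}
    (hf : Summable fun j => ‖f j‖) (hw : w ≠ 0) (hq0 : q ≠ 0) (hq : ‖q‖ < 1) :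
    Summable fun j => f j / (1 - w * q ^ j) := by
  refine Summable.of_norm_bounded_eventually (hf.mul_left 2) ?_
  filter_upwards [eventually_cofinite_half_le_norm_one_sub_mul_zpow hw hq0 hq] with j hj
  rw [norm_div, div_le_iff₀ (by linarith)]
  nlinarith [norm_nonneg (f j)]

end ZpowDenominator

def phi2Numerator (m s : ℝ) (τ z1 z2 : ℂ) (j : ℤ) : ℂ :=
  Complex.exp (-(2*(π:ℂ)*Complex.I)*((m:ℂ)*(j:ℂ)*(z1+z2) + (s:ℂ)*z2)) *
    Complex.exp (2*(π:ℂ)*Complex.I*τ*((m:ℂ)*(j:ℂ)^2 + (s:ℂ)*(j:ℂ)))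

section Phi2

variable (m s : ℝ) (τ z1 z2 : ℂ)

lemma Phi2_zero_eq_tsum :
    Phi2 m s τ z1 z2 0 = ∑' j : ℤ, phi2Numerator m s τ z1 z2 j /
      (1 - Complex.exp (-(2*(π:ℂ)*Complex.I)*z2) * Complex.exp (2*(π:ℂ)*Complex.I*τ) ^ j) := by
  simp [Phi2, phi2Numerator]

lemma phi2Numerator_add_one (j : ℤ) :
    phi2Numerator m (s + 1) τ z1 z2 j = phi2Numerator m s τ z1 z2 j *
      (Complex.exp (-(2*(π:ℂ)*Complex.I)*z2) * Complex.exp (2*(π:ℂ)*Complex.I*τ) ^ j) := by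
  rw [phi2Numerator, phi2Numerator, ← Complex.exp_int_mul]
  simp only [← Complex.exp_add]
  congr 1
  push_cast
  ring

variable {m τ}

lemma summable_norm_phi2Numerator (hm : 0 < m) (hτ : 0 < τ.im) :
    Summable fun j => ‖phi2Numerator m s τ z1 z2 j‖ := by
  have hθ : Summable (jacobiTheta₂_term · ((s:ℂ)*τ - (m:ℂ)*(z1+z2)) (2*(m:ℂ)*τ)) := by
    rw [summable_jacobiTheta₂_term_iff, show 2*(m:ℂ)*τ = ((2*m:ℝ):ℂ)*τ by push_cast; ring,
      Complex.im_ofReal_mul]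
    positivity
  refine summable_norm_iff.mpr ((hθ.mul_left (Complex.exp (-(2*(π:ℂ)*Complex.I)*((s:ℂ)*z2)))).congr
    fun j => ?_)
  rw [phi2Numerator, jacobiTheta₂_term, ← Complex.exp_add, ← Complex.exp_add]
  congr 1
  ring

lemma tsum_phi2Numerator (hm : m ≠ 0) :
    ∑' j : ℤ, phi2Numerator m s τ z1 z2 j =
      Complex.exp ((π:ℂ)*Complex.I*(s:ℂ)*(z1-z2)) *
        Complex.exp (2*(π:ℂ)*Complex.I*τ*((-(s^2)/(4*m) : ℝ) : ℂ)) *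
        jacobiThetaKM (-s) m τ (z1+z2) := by
  have hm' : (m:ℂ) ≠ 0 := Complex.ofReal_ne_zero.mpr hm
  rw [jacobiThetaKM, ← tsum_mul_left, ← (Equiv.neg ℤ).tsum_eq]
  refine tsum_congr fun j => ?_
  simp only [phi2Numerator, Equiv.neg_apply, Int.cast_neg, ← Complex.exp_add]
  congr 1
  push_cast
  field_simp
  ring

lemma Phi2_sub_Phi2_add_one (hm : 0 < m) (hτ : 0 < τ.im)
    (hden : ∀ j : ℤ, Complex.exp (-(2*(π:ℂ)*Complex.I)*z2) * Complex.exp (2*(π:ℂ)*Complex.I*τ) ^ j ≠ 1) :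
    Phi2 m s τ z1 z2 0 - Phi2 m (s + 1) τ z1 z2 0 =
      Complex.exp ((π:ℂ)*Complex.I*(s:ℂ)*(z1-z2)) *
        Complex.exp (2*(π:ℂ)*Complex.I*τ*((-(s^2)/(4*m) : ℝ) : ℂ)) *
        jacobiThetaKM (-s) m τ (z1+z2) := by
  have hw : Complex.exp (-(2*(π:ℂ)*Complex.I)*z2) ≠ 0 := Complex.exp_ne_zero _
  have hq0 : Complex.exp (2*(π:ℂ)*Complex.I*τ) ≠ 0 := Complex.exp_ne_zero _
  have hq : ‖Complex.exp (2*(π:ℂ)*Complex.I*τ)‖ < 1 :=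
    UpperHalfPlane.norm_exp_two_pi_I_lt_one ⟨τ, hτ⟩
  have hs := summable_div_one_sub_mul_zpow (summable_norm_phi2Numerator s z1 z2 hm hτ) hw hq0 hq
  have hs₁ :=
    summable_div_one_sub_mul_zpow (summable_norm_phi2Numerator (s + 1) z1 z2 hm hτ) hw hq0 hq
  rw [Phi2_zero_eq_tsum, Phi2_zero_eq_tsum, ← hs.tsum_sub hs₁, ← tsum_phi2Numerator s z1 z2 hm.ne']
  refine tsum_congr fun j => ?_
  rw [div_sub_div_same, phi2Numerator_add_one, ← mul_one_sub,
    mul_div_cancel_right₀ _ (sub_ne_zero.mpr (hden j).symm)]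

end Phi2

theorem stmt1_general (m s : ℝ) (hm : ∃ n : ℕ, 0 < n ∧ m = (n : ℝ) / 2)
    (a : ℕ)
    (τ z1 z2 : ℂ) (hτ : 0 < τ.im)
    (hden : ∀ j : ℤ, Complex.exp (-(2*(π:ℂ)*Complex.I)*z2) * Complex.exp (2*(π:ℂ)*Complex.I*τ) ^ j ≠ 1) :
    Phi2 m s τ z1 z2 0 - Phi2 m (s + a) τ z1 z2 0 =
      ∑ k ∈ Finset.range a,
        Complex.exp ((π:ℂ)*Complex.I*((s:ℂ)+(k:ℂ))*(z1-z2)) *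
          Complex.exp (2*(π:ℂ)*Complex.I*τ*((-((s+(k:ℝ))^2)/(4*m) : ℝ) : ℂ)) *
          jacobiThetaKM (-(s + k)) m τ (z1+z2) := by
  have hm_pos : 0 < m := by
    obtain ⟨n, hn, rfl⟩ := hm
    positivity
  have htelescope := Finset.sum_range_sub' (fun k : ℕ => Phi2 m (s + k) τ z1 z2 0) a
  rw [Nat.cast_zero, add_zero] at htelescope
  rw [← htelescope]
  refine Finset.sum_congr rfl fun k _ => ?_
  rw [Nat.cast_succ, ← add_assoc, Phi2_sub_Phi2_add_one _ _ _ hm_pos hτ hden]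
  push_cast
  rfl

theorem stmt1 (m s : ℝ) (hm : ∃ n : ℕ, 0 < n ∧ m = (n : ℝ) / 2)
    (hs : ∃ k : ℤ, s = (k : ℝ) / 2) (a : ℕ) (ha : 0 < a)
    (τ z1 z2 : ℂ) (hτ : 0 < τ.im)
    (hden : ∀ j : ℤ, Complex.exp (-(2*(π:ℂ)*Complex.I)*z2) * Complex.exp (2*(π:ℂ)*Complex.I*τ) ^ j ≠ 1) :
    Phi2 m s τ z1 z2 0 - Phi2 m (s + a) τ z1 z2 0 =
      ∑ k ∈ Finset.range a,
        Complex.exp ((π:ℂ)*Complex.I*((s:ℂ)+(k:ℂ))*(z1-z2)) *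
          Complex.exp (2*(π:ℂ)*Complex.I*τ*((-((s+(k:ℝ))^2)/(4*m) : ℝ) : ℂ)) *
          jacobiThetaKM (-(s + k)) m τ (z1+z2) :=
  stmt1_general m s hm a τ z1 z2 hτ hden

end
end

section
/- For m a positive half-integer and s a half-integer, Φ^{[m,s]}(τ, z₂, z₁, t) = Φ^{[m,1−s]}(τ, z₁, z₂, t). -/
open Real Complex Filter Topology

noncomputable section

lemma key_div {N₁ N₂ E F : ℂ} (hEF : E * F = 1) (hN : N₁ = N₂ * E)
    (hE : (1:ℂ) - E ≠ 0) (hF : (1:ℂ) - F ≠ 0) :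
    N₁ / (1 - E) = -(N₂ / (1 - F)) := by
  rw [← neg_div, div_eq_div_iff hE hF]
  linear_combination (1 - F) * hN - N₂ * hEF

lemma zpow_exp (τ : ℂ) (k : ℤ) :
    Complex.exp (2*(π:ℂ)*Complex.I*τ) ^ k = Complex.exp ((k:ℂ) * (2*(π:ℂ)*Complex.I*τ)) :=
  (Complex.exp_int_mul _ k).symm

lemma lemA (m s : ℝ) (τ z1 z2 t : ℂ)
    (h1 : ∀ j : ℤ, Complex.exp (2*(π:ℂ)*Complex.I*z1) * Complex.exp (2*(π:ℂ)*Complex.I*τ) ^ j ≠ 1)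
    (h3 : ∀ j : ℤ, Complex.exp (-(2*(π:ℂ)*Complex.I)*z1) * Complex.exp (2*(π:ℂ)*Complex.I*τ) ^ j ≠ 1) :
    Phi1 m (1-s) τ z1 z2 t = -Phi2 m s τ z2 z1 t := by
  unfold Phi1 Phi2
  conv_rhs => rw [← mul_neg]
  congr 1
  rw [← tsum_neg]
  calc (∑' j : ℤ,
      Complex.exp (2*(π:ℂ)*Complex.I*((m:ℂ)*(j:ℂ)*(z1+z2) + ((1-s:ℝ):ℂ)*z1)) *
        Complex.exp (2*(π:ℂ)*Complex.I*τ*((m:ℂ)*(j:ℂ)^2 + ((1-s:ℝ):ℂ)*(j:ℂ))) /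
        (1 - Complex.exp (2*(π:ℂ)*Complex.I*z1) * Complex.exp (2*(π:ℂ)*Complex.I*τ) ^ j))
      = ∑' j : ℤ,
      Complex.exp (2*(π:ℂ)*Complex.I*((m:ℂ)*((-j:ℤ):ℂ)*(z1+z2) + ((1-s:ℝ):ℂ)*z1)) *
        Complex.exp (2*(π:ℂ)*Complex.I*τ*((m:ℂ)*((-j:ℤ):ℂ)^2 + ((1-s:ℝ):ℂ)*((-j:ℤ):ℂ))) /
        (1 - Complex.exp (2*(π:ℂ)*Complex.I*z1) * Complex.exp (2*(π:ℂ)*Complex.I*τ) ^ (-j)) :=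
        ((Equiv.neg ℤ).tsum_eq _).symm
    _ = _ := by
        refine tsum_congr fun j => ?_
        refine key_div ?_ ?_ (sub_ne_zero_of_ne (Ne.symm (h1 (-j)))) (sub_ne_zero_of_ne (Ne.symm (h3 j)))
        · simp only [zpow_exp, ← Complex.exp_add]
          rw [← Complex.exp_zero]
          congr 1
          push_cast
          ring
        · simp only [zpow_exp, ← Complex.exp_add]
          congr 1
          push_cast
          ring

lemma lemB (m s : ℝ) (τ z1 z2 t : ℂ)
    (h2 : ∀ j : ℤ, Complex.exp (2*(π:ℂ)*Complex.I*z2) * Complex.exp (2*(π:ℂ)*Complex.I*τ) ^ j ≠ 1)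
    (h4 : ∀ j : ℤ, Complex.exp (-(2*(π:ℂ)*Complex.I)*z2) * Complex.exp (2*(π:ℂ)*Complex.I*τ) ^ j ≠ 1) :
    Phi2 m (1-s) τ z1 z2 t = -Phi1 m s τ z2 z1 t := by
  unfold Phi1 Phi2
  conv_rhs => rw [← mul_neg]
  congr 1
  rw [← tsum_neg]
  calc (∑' j : ℤ,
      Complex.exp (-(2*(π:ℂ)*Complex.I)*((m:ℂ)*(j:ℂ)*(z1+z2) + ((1-s:ℝ):ℂ)*z2)) *
        Complex.exp (2*(π:ℂ)*Complex.I*τ*((m:ℂ)*(j:ℂ)^2 + ((1-s:ℝ):ℂ)*(j:ℂ))) /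
        (1 - Complex.exp (-(2*(π:ℂ)*Complex.I)*z2) * Complex.exp (2*(π:ℂ)*Complex.I*τ) ^ j))
      = ∑' j : ℤ,
      Complex.exp (-(2*(π:ℂ)*Complex.I)*((m:ℂ)*((-j:ℤ):ℂ)*(z1+z2) + ((1-s:ℝ):ℂ)*z2)) *
        Complex.exp (2*(π:ℂ)*Complex.I*τ*((m:ℂ)*((-j:ℤ):ℂ)^2 + ((1-s:ℝ):ℂ)*((-j:ℤ):ℂ))) /
        (1 - Complex.exp (-(2*(π:ℂ)*Complex.I)*z2) * Complex.exp (2*(π:ℂ)*Complex.I*τ) ^ (-j)) :=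
        ((Equiv.neg ℤ).tsum_eq _).symm
    _ = _ := by
        refine tsum_congr fun j => ?_
        refine key_div ?_ ?_ (sub_ne_zero_of_ne (Ne.symm (h4 (-j)))) (sub_ne_zero_of_ne (Ne.symm (h2 j)))
        · simp only [zpow_exp, ← Complex.exp_add]
          rw [← Complex.exp_zero]
          congr 1
          push_cast
          ring
        · simp only [zpow_exp, ← Complex.exp_add]
          congr 1
          push_cast
          ring

theorem stmt3 (m s : ℝ) (hm : ∃ n : ℕ, 0 < n ∧ m = (n : ℝ) / 2)
    (hs : ∃ k : ℤ, s = (k : ℝ) / 2)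
    (τ z1 z2 t : ℂ) (hτ : 0 < τ.im)
    (h1 : ∀ j : ℤ, Complex.exp (2*(π:ℂ)*Complex.I*z1) * Complex.exp (2*(π:ℂ)*Complex.I*τ) ^ j ≠ 1)
    (h2 : ∀ j : ℤ, Complex.exp (2*(π:ℂ)*Complex.I*z2) * Complex.exp (2*(π:ℂ)*Complex.I*τ) ^ j ≠ 1)
    (h3 : ∀ j : ℤ, Complex.exp (-(2*(π:ℂ)*Complex.I)*z1) * Complex.exp (2*(π:ℂ)*Complex.I*τ) ^ j ≠ 1)
    (h4 : ∀ j : ℤ, Complex.exp (-(2*(π:ℂ)*Complex.I)*z2) * Complex.exp (2*(π:ℂ)*Complex.I*τ) ^ j ≠ 1) :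
    Phi m s τ z2 z1 t = Phi m (1 - s) τ z1 z2 t := by
  unfold Phi
  rw [lemA m s τ z1 z2 t h1 h3, lemB m s τ z1 z2 t h2 h4]
  ring

end
end

section
/- Let m be a positive half-integer and s a half-integer, and define f(τ, z) := Φ^{[m,s]}(2τ, z + τ/2, z − τ/2, 0). Then f(τ, n + pτ) = 0 for all integers n, p. -/
open Real Complex Filter Topology

noncomputable section

lemma exp_eq_of_int_diff (x y : ℂ) (a : ℤ) (h : x = y + (a : ℂ) * (2 * π * Complex.I)) :
    Complex.exp x = Complex.exp y := by
  rw [h, Complex.exp_add, Complex.exp_int_mul_two_pi_mul_I, mul_one]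

theorem stmt7 (m s : ℝ) (hm : ∃ n : ℕ, 0 < n ∧ m = (n : ℝ) / 2)
    (hs : ∃ k : ℤ, s = (k : ℝ) / 2)
    (τ : ℂ) (hτ : 0 < τ.im) (n p : ℤ) :
    Phi m s (2*τ) (((n:ℂ) + (p:ℂ)*τ) + τ/2) (((n:ℂ) + (p:ℂ)*τ) - τ/2) 0 = 0 := by
  obtain ⟨N, hN, rfl⟩ := hm
  obtain ⟨k, rfl⟩ := hs
  unfold Phi Phi1 Phi2
  rw [sub_eq_zero]
  congr 1
  rw [← Equiv.tsum_eq (Equiv.addRight (-p))]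
  refine tsum_congr fun j => ?_
  simp only [Equiv.coe_addRight]
  have hmc : ((((N:ℝ)/2 : ℝ)) : ℂ) = (N : ℂ) / 2 := by push_cast; ring
  have hsc : ((((k:ℝ)/2 : ℝ)) : ℂ) = (k : ℂ) / 2 := by push_cast; ring
  rw [hmc, hsc, ← Complex.exp_int_mul, ← Complex.exp_int_mul, ← Complex.exp_add,
    ← Complex.exp_add, ← Complex.exp_add, ← Complex.exp_add]
  congr 1
  · apply exp_eq_of_int_diff _ _ (n * (N * (2 * j - p) + k))
    push_cast
    ring
  · congr 1
    apply exp_eq_of_int_diff _ _ (2 * n)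
    push_cast
    ring
end
end
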